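/- arXiv:2002.05818 — 4 statements merged into one kernel-verified Lean document; each statement's English description precedes it below -/
import Mathlib

section
/- Given finitely many nonzero vectors x₁, ..., x_m in ℝ^d, there exists a unit vector θ ∈ S^{d-1} such that |⟨θ, x_i⟩| ≥ ‖x_i‖₂/(m√d) for every i. -/
open Real MeasureTheory
open scoped ENNReal


lemma gamma_midpoint (x : ℝ) (hx : 0 < x) :
    Gamma (x + 1) ≤ Gamma (x + 1/2) * Real.sqrt (x + 1/2) := by
  have h1 : (0:ℝ) < x + 1/2 := by linarith
  have h2 : (0:ℝ) < x + 3/2 := by linarith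
  have hc := Real.convexOn_log_Gamma.2 (Set.mem_Ioi.2 h1) (Set.mem_Ioi.2 h2)
    (by norm_num : (0:ℝ) ≤ 1/2) (by norm_num : (0:ℝ) ≤ 1/2) (by norm_num)
  simp only [smul_eq_mul, Function.comp_apply] at hc
  rw [show (1/2 : ℝ) * (x + 1/2) + 1/2 * (x + 3/2) = x + 1 by ring] at hc
  have h32 : Gamma (x + 3/2) = (x + 1/2) * Gamma (x + 1/2) := by
    have := Real.Gamma_add_one (ne_of_gt h1)
    rwa [show x + 1/2 + 1 = x + 3/2 by ring] at this
  have hG1 : 0 < Gamma (x + 1/2) := Real.Gamma_pos_of_pos h1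
  have hG3 : 0 < Gamma (x + 3/2) := Real.Gamma_pos_of_pos h2
  have hGx1 : 0 < Gamma (x + 1) := Real.Gamma_pos_of_pos (by linarith)
  have hsq : Gamma (x+1) ^ 2 ≤ Gamma (x+1/2) ^ 2 * (x + 1/2) := by
    have h2c : 2 * log (Gamma (x+1)) ≤ log (Gamma (x+1/2)) + log (Gamma (x+3/2)) := by
      linarith
    have : log (Gamma (x+1) ^ 2) ≤ log (Gamma (x+1/2) ^ 2 * (x + 1/2)) := by
      rw [Real.log_pow, Real.log_mul (by positivity) (ne_of_gt h1), Real.log_pow]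
      have h3 : log (Gamma (x+3/2)) = log (x+1/2) + log (Gamma (x+1/2)) := by
        rw [h32, Real.log_mul (ne_of_gt h1) (ne_of_gt hG1)]
      push_cast
      linarith
    exact (Real.log_le_log_iff (by positivity) (by positivity)).1 this
  calc Gamma (x+1) ≤ Real.sqrt (Gamma (x+1/2) ^ 2 * (x + 1/2)) := by
        rw [show Gamma (x+1) = Real.sqrt (Gamma (x+1)^2) by rw [Real.sqrt_sq hGx1.le]]
        exact Real.sqrt_le_sqrt hsq
    _ = Gamma (x + 1/2) * Real.sqrt (x + 1/2) := by
        rw [Real.sqrt_mul (sq_nonneg _), Real.sqrt_sq hG1.le]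


lemma key_ineq (k : ℕ) (hk : 1 ≤ k) :
    2 * (Real.sqrt π ^ k / Gamma (k/2 + 1)) <
      Real.sqrt (k+1) * (Real.sqrt π ^ (k+1) / Gamma ((k+1)/2 + 1)) := by
  set y : ℝ := ((k:ℝ)+1)/2 with hy
  have hy1 : (1:ℝ) ≤ y := by
    rw [hy, le_div_iff₀ (by norm_num)]
    have : (1:ℝ) ≤ (k:ℝ) := by exact_mod_cast hk
    linarith
  have hy0 : (0:ℝ) < y := by linarith
  have hka : (k:ℝ)/2 + 1 = y + 1/2 := by rw [hy]; ring
  have hkb : ((k:ℝ)+1)/2 + 1 = y + 1 := by rw [hy]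
  rw [hka, hkb]
  have hG1 : 0 < Gamma (y + 1/2) := Real.Gamma_pos_of_pos (by linarith)
  have hGy1 : 0 < Gamma (y + 1) := Real.Gamma_pos_of_pos (by linarith)
  have hπ : 0 < Real.sqrt π := Real.sqrt_pos.2 Real.pi_pos
  have hπk : 0 < Real.sqrt π ^ k := pow_pos hπ k
  have main : 2 * Gamma (y+1) < Real.sqrt ((k:ℝ)+1) * Real.sqrt π * Gamma (y+1/2) := by
    have h1 := gamma_midpoint y hy0
    have h2 : 2 * Real.sqrt (y + 1/2) < Real.sqrt ((k:ℝ)+1) * Real.sqrt π := by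
      have e1 : 2 * Real.sqrt (y + 1/2) = Real.sqrt (4*(y+1/2)) := by
        rw [Real.sqrt_mul (by norm_num) (y+1/2),
          show Real.sqrt (4:ℝ) = 2 by
            rw [show (4:ℝ) = 2^2 by norm_num, Real.sqrt_sq (by norm_num : (0:ℝ) ≤ 2)]]
      have e2 : Real.sqrt ((k:ℝ)+1) * Real.sqrt π = Real.sqrt (((k:ℝ)+1)*π) := by
        rw [Real.sqrt_mul (by positivity)]
      rw [e1, e2]
      apply Real.sqrt_lt_sqrt (by positivity)
      have hkk : ((k:ℝ)+1) = 2*y := by rw [hy]; ring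
      have hpi : (3.14:ℝ) < π := by have := Real.pi_gt_d6; linarith
      nlinarith
    calc 2 * Gamma (y+1) ≤ 2 * (Gamma (y + 1/2) * Real.sqrt (y + 1/2)) := by linarith
      _ = (2 * Real.sqrt (y+1/2)) * Gamma (y+1/2) := by ring
      _ < _ := mul_lt_mul_of_pos_right h2 hG1
  have eL : 2 * (Real.sqrt π ^ k / Gamma (y+1/2)) = (2 * Real.sqrt π ^ k) / Gamma (y+1/2) := by
    ring
  have eR : Real.sqrt ((k:ℝ)+1) * (Real.sqrt π ^ (k+1) / Gamma (y+1)) =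
      (Real.sqrt ((k:ℝ)+1) * Real.sqrt π ^ (k+1)) / Gamma (y+1) := by ring
  rw [eL, eR, div_lt_div_iff₀ hG1 hGy1, pow_succ]
  nlinarith [mul_lt_mul_of_pos_left main hπk]


lemma slab_bound (k : ℕ) (t : ℝ) :
    volume {y : EuclideanSpace ℝ (Fin (k+1)) | |y 0| < t ∧ ‖y‖ < 1}
      ≤ ENNReal.ofReal (2 * t) * volume (Metric.closedBall (0 : EuclideanSpace ℝ (Fin k)) 1) := by
  classical
  set B' : Set (Fin k → ℝ) := {w | ∑ j, (w j)^2 ≤ 1} with hB'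
  have hB'meas : MeasurableSet B' := by
    have : Continuous fun w : Fin k → ℝ => ∑ j, (w j)^2 := by continuity
    exact (isClosed_le this continuous_const).measurableSet
  set S' : Set (EuclideanSpace ℝ (Fin (k+1))) :=
    {y | y 0 ∈ Set.Icc (-t) t ∧ (∑ j : Fin k, (y j.succ)^2) ≤ 1} with hS'
  have hsub : {y : EuclideanSpace ℝ (Fin (k+1)) | |y 0| < t ∧ ‖y‖ < 1} ⊆ S' := by
    intro y hy
    obtain ⟨h1, h2⟩ := hy
    have h1' : y 0 ∈ Set.Icc (-t) t := by
      rw [Set.mem_Icc]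
      constructor <;> [linarith [neg_abs_le (y 0)]; linarith [le_abs_self (y 0)]]
    have hsum : ∑ i : Fin (k+1), (y i)^2 ≤ 1 := by
      have hne := EuclideanSpace.norm_eq y
      simp only [Real.norm_eq_abs, sq_abs] at hne
      have h3 : Real.sqrt (∑ i : Fin (k+1), (y i)^2) ≤ 1 := by rw [← hne]; exact h2.le
      have h4 : Real.sqrt (∑ i : Fin (k+1), (y i)^2) ^ 2 = ∑ i : Fin (k+1), (y i)^2 :=
        Real.sq_sqrt (Finset.sum_nonneg fun i _ => sq_nonneg (y i))
      nlinarith [Real.sqrt_nonneg (∑ i : Fin (k+1), (y i)^2)]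
    refine ⟨h1', ?_⟩
    have hspl := Fin.sum_univ_succ (fun i => (y i)^2)
    nlinarith [sq_nonneg (y 0)]
  refine le_trans (measure_mono hsub) ?_
  have hS'meas : MeasurableSet S' := by
    apply MeasurableSet.inter
    · have : Continuous fun y : EuclideanSpace ℝ (Fin (k+1)) => y 0 :=
        (continuous_apply _).comp (PiLp.continuous_ofLp 2 _)
      exact this.measurable measurableSet_Icc
    · have : Continuous fun y : EuclideanSpace ℝ (Fin (k+1)) => ∑ j : Fin k, (y j.succ)^2 := by
        apply continuous_finset_sum
        intro j _
        exact ((continuous_apply _).comp (PiLp.continuous_ofLp 2 _)).pow 2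
      exact (isClosed_le this continuous_const).measurableSet
  -- move to pi space
  have e1 := (EuclideanSpace.volume_preserving_symm_measurableEquiv_toLp (Fin (k+1))).symm
  have hvol1 : volume S' = volume ((MeasurableEquiv.toLp 2 (Fin (k+1) → ℝ)) ⁻¹' S') :=
    (e1.measure_preimage hS'meas.nullMeasurableSet).symm
  have hpre : (MeasurableEquiv.toLp 2 (Fin (k+1) → ℝ)) ⁻¹' S'
      = {z : Fin (k+1) → ℝ | z 0 ∈ Set.Icc (-t) t ∧ (∑ j : Fin k, (z j.succ)^2) ≤ 1} := rfl
  rw [hvol1, hpre]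
  -- split off the first coordinate
  have e2 := measurePreserving_piFinSuccAbove (fun _ : Fin (k+1) => (volume : Measure ℝ)) 0
  have hpre2 : {z : Fin (k+1) → ℝ | z 0 ∈ Set.Icc (-t) t ∧ (∑ j : Fin k, (z j.succ)^2) ≤ 1}
      = (MeasurableEquiv.piFinSuccAbove (fun _ : Fin (k+1) => ℝ) 0) ⁻¹' (Set.Icc (-t) t ×ˢ B') := by
    ext z
    simp only [Set.mem_setOf_eq, Set.mem_preimage, MeasurableEquiv.piFinSuccAbove_apply,
      Set.mem_prod, hB']
    constructor
    · rintro ⟨h1, h2⟩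
      refine ⟨h1, ?_⟩
      simpa [Fin.succAbove_zero, Fin.tail] using h2
    · rintro ⟨h1, h2⟩
      refine ⟨h1, ?_⟩
      simpa [Fin.succAbove_zero, Fin.tail] using h2
  rw [hpre2, MeasureTheory.volume_pi,
    e2.measure_preimage ((measurableSet_Icc.prod hB'meas).nullMeasurableSet),
    Measure.prod_prod, Real.volume_Icc, ← MeasureTheory.volume_pi]
  have hIcc : t - -t = 2 * t := by ring
  rw [hIcc]
  -- now relate B' volume to the ball
  have e3 := EuclideanSpace.volume_preserving_symm_measurableEquiv_toLp (Fin k)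
  have hball : (MeasurableEquiv.toLp 2 (Fin k → ℝ)).symm ⁻¹' B'
      = Metric.closedBall (0 : EuclideanSpace ℝ (Fin k)) 1 := by
    ext y
    simp only [Set.mem_preimage, hB', Set.mem_setOf_eq, Metric.mem_closedBall,
      dist_zero_right]
    have hne := EuclideanSpace.norm_eq y
    simp only [Real.norm_eq_abs, sq_abs] at hne
    have hcoord : ∀ j : Fin k, (MeasurableEquiv.toLp 2 (Fin k → ℝ)).symm y j = y j := fun _ => rfl
    constructor
    · intro h
      rw [hne]
      calc Real.sqrt (∑ i, (y i)^2) ≤ Real.sqrt 1 := Real.sqrt_le_sqrt (by simpa [hcoord] using h)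
        _ = 1 := Real.sqrt_one
    · intro h
      have h3 : Real.sqrt (∑ i, (y i)^2) ≤ 1 := by rw [← hne]; exact h
      have h4 : Real.sqrt (∑ i : Fin k, (y i)^2) ^ 2 = ∑ i : Fin k, (y i)^2 :=
        Real.sq_sqrt (Finset.sum_nonneg fun i _ => sq_nonneg (y i))
      have h5 : (∑ i, (y i)^2) ≤ 1 := by
        nlinarith [Real.sqrt_nonneg (∑ i, (y i)^2)]
      simpa [hcoord] using h5
  have : volume B' = volume (Metric.closedBall (0 : EuclideanSpace ℝ (Fin k)) 1) := by
    rw [← hball, e3.measure_preimage hB'meas.nullMeasurableSet]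
  rw [this]

/-- Given finitely many nonzero vectors x₁,...,x_m in ℝ^d, there is a unit vector θ
with |⟨θ, x_i⟩| ≥ ‖x_i‖₂/(m√d) for every i. -/
theorem stmt2 (d m : ℕ) (hd : 0 < d) (hm : 0 < m)
    (x : Fin m → EuclideanSpace ℝ (Fin d)) (hx : ∀ i, x i ≠ 0) :
    ∃ θ : EuclideanSpace ℝ (Fin d), ‖θ‖ = 1 ∧
      ∀ i, ‖x i‖ / (m * Real.sqrt d) ≤ |(inner ℝ θ (x i) : ℝ)| := by
  classical
  obtain ⟨k, rfl⟩ : ∃ k, d = k + 1 := ⟨d - 1, (Nat.succ_pred_eq_of_pos hd).symm⟩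
  rcases k with _ | j
  · -- d = 1
    refine ⟨EuclideanSpace.single 0 1, by simp [EuclideanSpace.norm_single], fun i => ?_⟩
    have hinner : (inner ℝ (EuclideanSpace.single (0 : Fin 1) (1:ℝ)) (x i) : ℝ) = x i 0 := by
      rw [EuclideanSpace.inner_single_left]; simp
    have hnorm : ‖x i‖ = |x i 0| := by
      rw [EuclideanSpace.norm_eq]
      simp [Real.sqrt_sq_eq_abs]
    rw [hinner, ← hnorm]
    have hm1 : (1:ℝ) ≤ m := by exact_mod_cast hm
    have hs1 : Real.sqrt ((0+1:ℕ):ℝ) = 1 := by norm_num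
    rw [hs1, mul_one]
    exact div_le_self (norm_nonneg _) hm1
  · -- d = j + 2 = k + 1, k = j + 1
    have hdr : (0:ℝ) < Real.sqrt (j+1+1:ℕ) := Real.sqrt_pos.2 (by positivity)
    have hmr : (0:ℝ) < m := by exact_mod_cast hm
    set t : ℝ := 1 / (m * Real.sqrt (j+1+1:ℕ)) with ht
    have ht0 : 0 < t := by positivity
    set u : Fin m → EuclideanSpace ℝ (Fin (j+1+1)) := fun i => ‖x i‖⁻¹ • x i with hu
    have hnu : ∀ i, ‖u i‖ = 1 := fun i => by
      rw [hu, norm_smul, norm_inv, norm_norm]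
      exact inv_mul_cancel₀ (norm_ne_zero_iff.2 (hx i))
    set A : Fin m → Set (EuclideanSpace ℝ (Fin (j+1+1))) :=
      fun i => {θ | |(inner ℝ (u i) θ : ℝ)| < t ∧ ‖θ‖ < 1} with hA
    have hAvol : ∀ i, volume (A i)
        ≤ ENNReal.ofReal (2 * t) * volume (Metric.closedBall (0 : EuclideanSpace ℝ (Fin (j+1))) 1) := by
      intro i
      have hcard : Module.finrank ℝ (EuclideanSpace ℝ (Fin (j+1+1)))
          = Fintype.card (Fin (j+1+1)) := by
        simp [finrank_euclideanSpace]
      have horth : Orthonormal ℝ (({0} : Set (Fin (j+1+1))).restrict (fun _ => u i)) := by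
        constructor
        · intro a; exact hnu i
        · intro a b hab
          exact absurd (Subtype.ext ((Set.mem_singleton_iff.1 a.2).trans
            (Set.mem_singleton_iff.1 b.2).symm)) hab
      obtain ⟨b, hb⟩ := Orthonormal.exists_orthonormalBasis_extension_of_card_eq hcard horth
      have hb0 : b 0 = u i := hb 0 rfl
      have hArepr : A i
          = b.repr ⁻¹' {y : EuclideanSpace ℝ (Fin (j+1+1)) | |y 0| < t ∧ ‖y‖ < 1} := by
        ext θ
        simp only [hA, Set.mem_setOf_eq, Set.mem_preimage]
        have h1 : (inner ℝ (u i) θ : ℝ) = b.repr θ 0 := by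
          rw [← hb0, ← LinearIsometryEquiv.inner_map_map b.repr (b 0) θ,
            OrthonormalBasis.repr_self, EuclideanSpace.inner_single_left]
          simp
        have h2 : ‖θ‖ = ‖b.repr θ‖ := (LinearIsometryEquiv.norm_map b.repr θ).symm
        rw [h1, h2]
      have hSmeas : MeasurableSet {y : EuclideanSpace ℝ (Fin (j+1+1)) | |y 0| < t ∧ ‖y‖ < 1} := by
        apply MeasurableSet.inter
        · have hc : Continuous fun y : EuclideanSpace ℝ (Fin (j+1+1)) => |y 0| :=
            ((continuous_apply _).comp (PiLp.continuous_ofLp 2 _)).abs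
          exact (isOpen_lt hc continuous_const).measurableSet
        · exact (isOpen_lt continuous_norm continuous_const).measurableSet
      rw [hArepr, b.measurePreserving_repr.measure_preimage hSmeas.nullMeasurableSet]
      exact slab_bound (j+1) t
    have hunion : volume (⋃ i, A i)
        < volume (Metric.ball (0 : EuclideanSpace ℝ (Fin (j+1+1))) 1) := by
      have h1 : volume (⋃ i, A i) ≤ ∑ i : Fin m, volume (A i) := by
        refine le_trans (measure_iUnion_le A) ?_
        rw [tsum_fintype]
      have h2 : (∑ i : Fin m, volume (A i))
          ≤ (m : ℝ≥0∞) * (ENNReal.ofReal (2 * t)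
              * volume (Metric.closedBall (0 : EuclideanSpace ℝ (Fin (j+1))) 1)) := by
        calc (∑ i : Fin m, volume (A i))
            ≤ ∑ _i : Fin m, (ENNReal.ofReal (2 * t)
              * volume (Metric.closedBall (0 : EuclideanSpace ℝ (Fin (j+1))) 1)) :=
              Finset.sum_le_sum fun i _ => hAvol i
          _ = _ := by rw [Finset.sum_const, Finset.card_univ, Fintype.card_fin, nsmul_eq_mul]
      refine lt_of_le_of_lt (le_trans h1 h2) ?_
      rw [EuclideanSpace.volume_closedBall, EuclideanSpace.volume_ball]
      simp only [Fintype.card_fin, ENNReal.ofReal_one, one_pow, one_mul]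
      rw [← ENNReal.ofReal_natCast m, ← ENNReal.ofReal_mul (by positivity),
        ← ENNReal.ofReal_mul (by positivity)]
      have hval : (m:ℝ) * (2 * t * (Real.sqrt π ^ (j+1) / Gamma ((j+1:ℕ)/2 + 1)))
          = 2 * (Real.sqrt π ^ (j+1) / Gamma ((j+1:ℕ)/2 + 1)) / Real.sqrt (j+1+1:ℕ) := by
        rw [ht]; field_simp
      rw [hval]
      apply (ENNReal.ofReal_lt_ofReal_iff (by
        have hGpos : 0 < Gamma (((j+1+1:ℕ):ℝ)/2 + 1) := Real.Gamma_pos_of_pos (by positivity)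
        positivity)).2
      rw [div_lt_iff₀ hdr]
      have hkey := key_ineq (j+1) (by omega)
      have hc1 : ((j+1+1:ℕ):ℝ) = ((j+1:ℕ):ℝ) + 1 := by push_cast; ring
      rw [hc1]
      calc 2 * (Real.sqrt π ^ (j+1) / Gamma (((j+1:ℕ):ℝ)/2 + 1))
          < Real.sqrt (((j+1:ℕ):ℝ)+1) * (Real.sqrt π ^ (j+1+1)
              / Gamma ((((j+1:ℕ):ℝ)+1)/2 + 1)) := hkey
        _ = Real.sqrt π ^ (j+1+1) / Gamma ((((j+1:ℕ):ℝ)+1)/2 + 1)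
              * Real.sqrt (((j+1:ℕ):ℝ)+1) := by ring
    -- extract a good point
    have hnsub : ¬ (Metric.ball (0 : EuclideanSpace ℝ (Fin (j+1+1))) 1 ⊆ ⋃ i, A i) :=
      fun h => absurd (measure_mono h) (not_le.2 hunion)
    obtain ⟨θ₀, hθ₀b, hθ₀n⟩ := Set.not_subset.1 hnsub
    rw [Metric.mem_ball, dist_zero_right] at hθ₀b
    have hgood : ∀ i, t ≤ |(inner ℝ (u i) θ₀ : ℝ)| := by
      intro i
      by_contra hcon
      push_neg at hcon
      exact hθ₀n (Set.mem_iUnion.2 ⟨i, ⟨hcon, hθ₀b⟩⟩)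
    have hθ₀ne : θ₀ ≠ 0 := by
      intro h0
      have := hgood ⟨0, hm⟩
      rw [h0, inner_zero_right] at this
      simp at this
      linarith
    have hθ₀pos : 0 < ‖θ₀‖ := norm_pos_iff.2 hθ₀ne
    refine ⟨‖θ₀‖⁻¹ • θ₀, ?_, fun i => ?_⟩
    · rw [norm_smul, norm_inv, norm_norm]
      exact inv_mul_cancel₀ (ne_of_gt hθ₀pos)
    · have hxi : x i = ‖x i‖ • u i := by
        rw [hu]
        rw [smul_smul, mul_inv_cancel₀ (norm_ne_zero_iff.2 (hx i)), one_smul]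
      have h3 : (inner ℝ θ₀ (x i) : ℝ) = ‖x i‖ * (inner ℝ (u i) θ₀ : ℝ) := by
        conv_lhs => rw [hxi]
        rw [real_inner_smul_right, real_inner_comm]
      have hinner : (inner ℝ (‖θ₀‖⁻¹ • θ₀) (x i) : ℝ)
          = ‖θ₀‖⁻¹ * (‖x i‖ * (inner ℝ (u i) θ₀ : ℝ)) := by
        rw [real_inner_smul_left, h3]
      rw [hinner, abs_mul, abs_mul, abs_of_nonneg (inv_nonneg.2 (norm_nonneg θ₀)),
        abs_of_nonneg (norm_nonneg (x i))]
      have hgoal : ‖x i‖ / ((m:ℝ) * Real.sqrt ((j+1+1:ℕ):ℝ)) = ‖x i‖ * t := by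
        rw [ht]; field_simp
      rw [hgoal]
      have hinv : 1 ≤ ‖θ₀‖⁻¹ := by
        rw [le_inv_comm₀ one_pos hθ₀pos]
        simpa using hθ₀b.le
      calc ‖x i‖ * t ≤ ‖x i‖ * |(inner ℝ (u i) θ₀ : ℝ)| :=
            mul_le_mul_of_nonneg_left (hgood i) (norm_nonneg _)
        _ = 1 * (‖x i‖ * |(inner ℝ (u i) θ₀ : ℝ)|) := (one_mul _).symm
        _ ≤ ‖θ₀‖⁻¹ * (‖x i‖ * |(inner ℝ (u i) θ₀ : ℝ)|) :=
            mul_le_mul_of_nonneg_right hinv (by positivity)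
end

section
/- Let Γ = Σ_{j=1}^k w_j δ_{μ_j} be a k-atomic distribution on ℝ^d with covariance-type matrix Σ = Σ_j w_j μ_j μ_jᵀ having eigenvalues λ₁ ≥ ... ≥ λ_d. Let Σ' be any symmetric d×d matrix and Π'_r the orthogonal projection onto the span of the top r eigenvectors of Σ'. Then W₂²(Γ, Γ_{Π'_r}) ≤ k(λ_{r+1} + 2‖Σ − Σ'‖₂), where Γ_{Π'_r} is the pushforward of Γ by Π'_r and ‖·‖₂ is the operator norm. -/
open MeasureTheory

/-- Squared Wasserstein-2 distance: infimum over couplings of the expected squared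
distance. -/
noncomputable def W2sq {E : Type*} [MeasurableSpace E] [PseudoMetricSpace E]
    (μ ν : Measure E) : ℝ :=
  sInf {x | ∃ π : Measure (E × E),
    π.map Prod.fst = μ ∧ π.map Prod.snd = ν ∧ x = ∫ p, dist p.1 p.2 ^ 2 ∂π}

section Aux

lemma map_finsum_aux {α β : Type*} [MeasurableSpace α] [MeasurableSpace β] {k : ℕ}
    (m : Fin k → Measure α) {f : α → β} (hf : Measurable f) :
    (∑ j, m j).map f = ∑ j, (m j).map f := by
  induction (Finset.univ : Finset (Fin k)) using Finset.induction with
  | empty => simp [Measure.map_zero]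
  | insert _ _ hx ih => simp [Finset.sum_insert hx, Measure.map_add _ _ hf, ih]

lemma W2sq_le_sum_aux {d k : ℕ} (w : Fin k → ℝ) (hw : ∀ j, 0 ≤ w j)
    (μ : Fin k → EuclideanSpace ℝ (Fin d))
    (P : EuclideanSpace ℝ (Fin d) →L[ℝ] EuclideanSpace ℝ (Fin d)) :
    W2sq (∑ j, ENNReal.ofReal (w j) • Measure.dirac (μ j))
        ((∑ j, ENNReal.ofReal (w j) • Measure.dirac (μ j)).map P)
      ≤ ∑ j, w j * dist (μ j) (P (μ j)) ^ 2 := by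
  have hPm : Measurable P := P.continuous.measurable
  apply csInf_le
  · exact ⟨0, fun x ⟨π', _, _, hx⟩ => hx ▸ integral_nonneg fun p => sq_nonneg _⟩
  refine ⟨∑ j, ENNReal.ofReal (w j) • Measure.dirac (μ j, P (μ j)), ?_, ?_, ?_⟩
  · rw [map_finsum_aux _ measurable_fst]
    simp [Measure.map_smul, Measure.map_dirac' measurable_fst]
  · rw [map_finsum_aux _ measurable_snd, map_finsum_aux _ hPm]
    simp [Measure.map_smul, Measure.map_dirac' measurable_snd, Measure.map_dirac' hPm]
  · rw [integral_finset_sum_measure]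
    · refine (Finset.sum_congr rfl fun j _ => ?_).symm
      rw [integral_smul_measure, integral_dirac]
      simp [ENNReal.toReal_ofReal (hw j)]
    · intro j _
      refine Integrable.smul_measure ?_ ENNReal.ofReal_ne_top
      exact (integrable_const _).congr (ae_eq_dirac (fun p : _ × _ => dist p.1 p.2 ^ 2)).symm

variable {d : ℕ}
local notation "E" => EuclideanSpace ℝ (Fin d)

lemma quad_form_aux (b : OrthonormalBasis (Fin d) ℝ E) (T : E →L[ℝ] E)
    (hsym : ∀ x y : E, (inner ℝ (T x) y : ℝ) = inner ℝ x (T y))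
    (lam : Fin d → ℝ) (hT : ∀ i, T (b i) = lam i • b i) (x : E) :
    (inner ℝ x (T x) : ℝ) = ∑ i, lam i * (inner ℝ (b i) x : ℝ) ^ 2 := by
  rw [← b.sum_inner_mul_inner x (T x)]
  refine Finset.sum_congr rfl fun i _ => ?_
  rw [← hsym, hT, real_inner_smul_left, real_inner_comm x (b i)]
  ring

lemma parseval_aux (b : OrthonormalBasis (Fin d) ℝ E) (x : E) :
    ∑ i, (inner ℝ (b i) x : ℝ) ^ 2 = ‖x‖ ^ 2 := by
  have := b.sum_inner_mul_inner x x
  rw [real_inner_self_eq_norm_sq] at this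
  rw [← this]
  refine Finset.sum_congr rfl fun i _ => ?_
  rw [sq, real_inner_comm x (b i)]

lemma coeff_zero_aux (b : OrthonormalBasis (Fin d) ℝ E) (s : Set (Fin d)) {x : E}
    (hx : x ∈ Submodule.span ℝ (b '' s)) {i : Fin d} (hi : i ∉ s) :
    (inner ℝ (b i) x : ℝ) = 0 := by
  induction hx using Submodule.span_induction with
  | mem y hy =>
    obtain ⟨j, hj, rfl⟩ := hy
    exact b.orthonormal.2 (fun h => hi (h ▸ hj))
  | zero => exact inner_zero_right _
  | add y z _ _ hy hz => rw [inner_add_right, hy, hz]; ring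
  | smul a y _ hy => rw [real_inner_smul_right, hy]; ring

lemma rayleigh_low_aux (b : OrthonormalBasis (Fin d) ℝ E) (T : E →L[ℝ] E)
    (hsym : ∀ x y : E, (inner ℝ (T x) y : ℝ) = inner ℝ x (T y))
    (lam : Fin d → ℝ) (hlam : Antitone lam) (hT : ∀ i, T (b i) = lam i • b i)
    {r : ℕ} (hr : r < d) {x : E} (hx : ‖x‖ = 1)
    (hc : ∀ i : Fin d, r < (i : ℕ) → (inner ℝ (b i) x : ℝ) = 0) :
    lam ⟨r, hr⟩ ≤ (inner ℝ x (T x) : ℝ) := by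
  rw [quad_form_aux b T hsym lam hT]
  calc lam ⟨r, hr⟩ = ∑ i, lam ⟨r, hr⟩ * (inner ℝ (b i) x : ℝ) ^ 2 := by
        rw [← Finset.mul_sum, parseval_aux, hx]; norm_num
    _ ≤ ∑ i, lam i * (inner ℝ (b i) x : ℝ) ^ 2 := by
        refine Finset.sum_le_sum fun i _ => ?_
        rcases le_or_gt (i : ℕ) r with h | h
        · exact mul_le_mul_of_nonneg_right (hlam (by exact h)) (sq_nonneg _)
        · rw [hc i h]; simp

lemma rayleigh_high_aux (b : OrthonormalBasis (Fin d) ℝ E) (T : E →L[ℝ] E)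
    (hsym : ∀ x y : E, (inner ℝ (T x) y : ℝ) = inner ℝ x (T y))
    (lam : Fin d → ℝ) (hlam : Antitone lam) (hT : ∀ i, T (b i) = lam i • b i)
    {r : ℕ} (hr : r < d) {x : E} (hx : ‖x‖ = 1)
    (hc : ∀ i : Fin d, (i : ℕ) < r → (inner ℝ (b i) x : ℝ) = 0) :
    (inner ℝ x (T x) : ℝ) ≤ lam ⟨r, hr⟩ := by
  rw [quad_form_aux b T hsym lam hT]
  calc ∑ i, lam i * (inner ℝ (b i) x : ℝ) ^ 2
      ≤ ∑ i, lam ⟨r, hr⟩ * (inner ℝ (b i) x : ℝ) ^ 2 := by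
        refine Finset.sum_le_sum fun i _ => ?_
        rcases lt_or_ge (i : ℕ) r with h | h
        · rw [hc i h]; simp
        · exact mul_le_mul_of_nonneg_right (hlam (by exact h)) (sq_nonneg _)
    _ = lam ⟨r, hr⟩ := by rw [← Finset.mul_sum, parseval_aux, hx]; norm_num

lemma span_card_aux (b : OrthonormalBasis (Fin d) ℝ E) (s : Set (Fin d)) [Fintype s] :
    Module.finrank ℝ (Submodule.span ℝ (b '' s)) = Fintype.card s := by
  rw [Set.image_eq_range]
  exact finrank_span_eq_card
    ((b.orthonormal.linearIndependent).comp Subtype.val Subtype.val_injective)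

lemma card_le_aux (r : ℕ) (hr : r < d) :
    Fintype.card {i : Fin d // (i : ℕ) ≤ r} = r + 1 := by
  rw [Fintype.card_congr (⟨fun i => (⟨i.1, Nat.lt_succ_of_le i.2⟩ : Fin (r+1)),
    fun j => ⟨⟨j.1, lt_of_le_of_lt (Nat.le_of_lt_succ j.2) hr⟩, Nat.le_of_lt_succ j.2⟩,
    fun i => by ext; simp, fun j => by ext; simp⟩ : {i : Fin d // (i : ℕ) ≤ r} ≃ Fin (r+1))]
  simp

lemma card_ge_aux (r : ℕ) (hr : r < d) :
    Fintype.card {i : Fin d // r ≤ (i : ℕ)} = d - r := by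
  rw [Fintype.card_congr (⟨fun i => (⟨i.1 - r, by omega⟩ : Fin (d - r)),
    fun j => ⟨⟨j.1 + r, by omega⟩, Nat.le_add_left r j.1⟩,
    fun i => by ext; have := i.2; simp; omega, fun j => by ext; simp⟩ :
    {i : Fin d // r ≤ (i : ℕ)} ≃ Fin (d - r))]
  simp

lemma weyl_aux {r : ℕ} (hr : r < d) (A B : E →L[ℝ] E)
    (hAsym : ∀ x y : E, (inner ℝ (A x) y : ℝ) = inner ℝ x (A y))
    (hBsym : ∀ x y : E, (inner ℝ (B x) y : ℝ) = inner ℝ x (B y))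
    (lam lam' : Fin d → ℝ) (hlam : Antitone lam) (hlam' : Antitone lam')
    (b b' : OrthonormalBasis (Fin d) ℝ E)
    (hb : ∀ i, A (b i) = lam i • b i) (hb' : ∀ i, B (b' i) = lam' i • b' i) :
    lam' ⟨r, hr⟩ ≤ lam ⟨r, hr⟩ + ‖A - B‖ := by
  set U := Submodule.span ℝ (b' '' {i : Fin d | (i : ℕ) ≤ r}) with hU
  set V := Submodule.span ℝ (b '' {i : Fin d | r ≤ (i : ℕ)}) with hV
  have hrU : Module.finrank ℝ U = r + 1 := by
    rw [hU, span_card_aux]; exact card_le_aux r hr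
  have hrV : Module.finrank ℝ V = d - r := by
    rw [hV, span_card_aux]; exact card_ge_aux r hr
  have hdim : 0 < Module.finrank ℝ (U ⊓ V : Submodule ℝ E) := by
    have h1 := Submodule.finrank_sup_add_finrank_inf_eq U V
    have h2 : Module.finrank ℝ (U ⊔ V : Submodule ℝ E) ≤ d := by
      have := Submodule.finrank_le (U ⊔ V)
      simpa [finrank_euclideanSpace] using this
    omega
  have hne : (U ⊓ V : Submodule ℝ E) ≠ ⊥ := by
    intro h; rw [h] at hdim; simp at hdim
  obtain ⟨x, hxUV, hx0⟩ := Submodule.exists_mem_ne_zero_of_ne_bot hne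
  set u : E := ‖x‖⁻¹ • x with hu
  have hxn : ‖x‖ ≠ 0 := norm_ne_zero_iff.2 hx0
  have hun : ‖u‖ = 1 := by
    rw [hu, norm_smul, norm_inv, norm_norm, inv_mul_cancel₀ hxn]
  have huU : u ∈ U := U.smul_mem _ (hxUV.1)
  have huV : u ∈ V := V.smul_mem _ (hxUV.2)
  have h1 : lam' ⟨r, hr⟩ ≤ (inner ℝ u (B u) : ℝ) := by
    refine rayleigh_low_aux b' B hBsym lam' hlam' hb' hr hun fun i hi => ?_
    exact coeff_zero_aux b' _ huU (by simp; omega)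
  have h2 : (inner ℝ u (A u) : ℝ) ≤ lam ⟨r, hr⟩ := by
    refine rayleigh_high_aux b A hAsym lam hlam hb hr hun fun i hi => ?_
    exact coeff_zero_aux b _ huV (by simp; omega)
  have h3 : (inner ℝ u (B u) : ℝ) ≤ (inner ℝ u (A u) : ℝ) + ‖A - B‖ := by
    have : (inner ℝ u (B u) : ℝ) - inner ℝ u (A u) = inner ℝ u ((B - A) u) := by
      simp [inner_sub_right]
    nlinarith [real_inner_le_norm u ((B - A) u),
      (B - A).le_opNorm u, norm_sub_rev A B, norm_nonneg ((B - A) u),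
      norm_nonneg (B - A)]
  linarith

end Aux

/-- Projection perturbation bound: if Γ = Σ w_j δ_{μ_j} has second-moment operator A
with (sorted) eigenvalues `lam`, B is any symmetric operator with (sorted) eigenvalues
`lam'` and eigenbasis `b'`, and P is the projection onto the top r eigenvectors of B,
then W₂²(Γ, Γ∘P⁻¹) ≤ k(λ_{r+1} + 2‖A − B‖). -/
theorem stmt3 (d k r : ℕ) (hr : r < d)
    (w : Fin k → ℝ) (μ : Fin k → EuclideanSpace ℝ (Fin d))
    (hw : ∀ j, 0 ≤ w j) (hw1 : ∑ j, w j = 1)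
    (A B P : EuclideanSpace ℝ (Fin d) →L[ℝ] EuclideanSpace ℝ (Fin d))
    (hA : ∀ x, A x = ∑ j, w j • ((inner ℝ (μ j) x : ℝ) • μ j))
    (lam lam' : Fin d → ℝ) (hlam : Antitone lam) (hlam' : Antitone lam')
    (b : OrthonormalBasis (Fin d) ℝ (EuclideanSpace ℝ (Fin d)))
    (hb : ∀ i, A (b i) = lam i • b i)
    (hBsym : ∀ x y, (inner ℝ (B x) y : ℝ) = (inner ℝ x (B y) : ℝ))
    (b' : OrthonormalBasis (Fin d) ℝ (EuclideanSpace ℝ (Fin d)))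
    (hb' : ∀ i, B (b' i) = lam' i • b' i)
    (hP : ∀ x, P x = ∑ i ∈ Finset.univ.filter (fun i : Fin d => (i : ℕ) < r),
      (inner ℝ (b' i) x : ℝ) • b' i) :
    W2sq (∑ j, ENNReal.ofReal (w j) • Measure.dirac (μ j))
        ((∑ j, ENNReal.ofReal (w j) • Measure.dirac (μ j)).map P)
      ≤ k * (lam ⟨r, hr⟩ + 2 * ‖A - B‖) := by
  -- quadratic form of A
  have hxAx : ∀ x : EuclideanSpace ℝ (Fin d),
      (inner ℝ x (A x) : ℝ) = ∑ j, w j * (inner ℝ (μ j) x : ℝ) ^ 2 := by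
    intro x
    rw [hA, inner_sum]
    refine Finset.sum_congr rfl fun j _ => ?_
    rw [real_inner_smul_right, real_inner_smul_right, real_inner_comm x (μ j)]
    ring
  -- symmetry of A
  have hAsym : ∀ x y : EuclideanSpace ℝ (Fin d),
      (inner ℝ (A x) y : ℝ) = inner ℝ x (A y) := by
    intro x y
    rw [hA, hA, sum_inner, inner_sum]
    refine Finset.sum_congr rfl fun j _ => ?_
    rw [real_inner_smul_left, real_inner_smul_left, real_inner_smul_right,
      real_inner_smul_right, real_inner_comm x (μ j)]
    ring
  -- coefficients of v_j := μ j - P (μ j) vanish for i < r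
  have hcoeff : ∀ (x : EuclideanSpace ℝ (Fin d)) (i : Fin d), (i : ℕ) < r →
      (inner ℝ (b' i) (x - P x) : ℝ) = 0 := by
    intro x i hi
    rw [inner_sub_right, hP, inner_sum]
    simp only [real_inner_smul_right]
    rw [Finset.sum_eq_single i]
    · rw [orthonormal_iff_ite.mp b'.orthonormal]
      simp
    · intro i' _ hne
      rw [orthonormal_iff_ite.mp b'.orthonormal]
      simp [Ne.symm hne]
    · intro hni
      simp [hi] at hni
  -- ⟪P x, x - P x⟫ = 0
  have hPorth : ∀ x : EuclideanSpace ℝ (Fin d),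
      (inner ℝ (P x) (x - P x) : ℝ) = 0 := by
    intro x
    set v := x - P x with hvdef
    rw [hP, sum_inner]
    refine Finset.sum_eq_zero fun i hi => ?_
    have hc : (inner ℝ (b' i) v : ℝ) = 0 := by
      rw [hvdef]; exact hcoeff x i (Finset.mem_filter.mp hi).2
    rw [real_inner_smul_left, hc, mul_zero]
  -- lam r is nonneg
  have hlamr : 0 ≤ lam ⟨r, hr⟩ := by
    have h1 : (inner ℝ (b ⟨r, hr⟩) (A (b ⟨r, hr⟩)) : ℝ) = lam ⟨r, hr⟩ := by
      rw [hb, real_inner_smul_right, real_inner_self_eq_norm_sq, b.orthonormal.1]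
      norm_num
    rw [← h1, hxAx]
    exact Finset.sum_nonneg fun j _ => mul_nonneg (hw j) (sq_nonneg _)
  have hABnn : (0:ℝ) ≤ ‖A - B‖ := norm_nonneg _
  -- per-atom bound
  have key : ∀ j, w j * ‖μ j - P (μ j)‖ ^ 2 ≤ lam ⟨r, hr⟩ + 2 * ‖A - B‖ := by
    intro j
    set v : EuclideanSpace ℝ (Fin d) := μ j - P (μ j) with hv
    by_cases hv0 : v = 0
    · rw [hv0, norm_zero]
      nlinarith
    · have hvn : ‖v‖ ≠ 0 := norm_ne_zero_iff.2 hv0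
      set u : EuclideanSpace ℝ (Fin d) := ‖v‖⁻¹ • v with hu
      have hun : ‖u‖ = 1 := by
        rw [hu, norm_smul, norm_inv, norm_norm, inv_mul_cancel₀ hvn]
      -- inner (μ j) u = ‖v‖
      have hmv : (inner ℝ (μ j) v : ℝ) = ‖v‖ ^ 2 := by
        have : μ j = P (μ j) + v := by rw [hv]; abel
        rw [this, inner_add_left, hPorth (μ j), real_inner_self_eq_norm_sq]
        ring
      have hmu : (inner ℝ (μ j) u : ℝ) = ‖v‖ := by
        rw [hu, real_inner_smul_right, hmv]
        field_simp
      -- w j ‖v‖² ≤ ⟪u, A u⟫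
      have h1 : w j * ‖v‖ ^ 2 ≤ (inner ℝ u (A u) : ℝ) := by
        rw [hxAx, ← hmu]
        exact Finset.single_le_sum (f := fun j' => w j' * (inner ℝ (μ j') u : ℝ) ^ 2)
          (fun j' _ => mul_nonneg (hw j') (sq_nonneg _)) (Finset.mem_univ j)
      -- ⟪u, A u⟫ ≤ ⟪u, B u⟫ + ‖A - B‖
      have h2 : (inner ℝ u (A u) : ℝ) ≤ (inner ℝ u (B u) : ℝ) + ‖A - B‖ := by
        have heq : (inner ℝ u (A u) : ℝ) - inner ℝ u (B u) = inner ℝ u ((A - B) u) := by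
          simp [inner_sub_right]
        nlinarith [real_inner_le_norm u ((A - B) u), (A - B).le_opNorm u,
          norm_nonneg ((A - B) u)]
      -- ⟪u, B u⟫ ≤ lam' r
      have h3 : (inner ℝ u (B u) : ℝ) ≤ lam' ⟨r, hr⟩ := by
        refine rayleigh_high_aux b' B hBsym lam' hlam' hb' hr hun fun i hi => ?_
        rw [hu, real_inner_smul_right, hcoeff (μ j) i hi, mul_zero]
      have h4 := weyl_aux hr A B hAsym hBsym lam lam' hlam hlam' b b' hb hb'
      nlinarith [sq_nonneg ‖v‖]
  calc W2sq (∑ j, ENNReal.ofReal (w j) • Measure.dirac (μ j))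
        ((∑ j, ENNReal.ofReal (w j) • Measure.dirac (μ j)).map P)
      ≤ ∑ j, w j * dist (μ j) (P (μ j)) ^ 2 := W2sq_le_sum_aux w hw μ P
    _ ≤ ∑ _j : Fin k, (lam ⟨r, hr⟩ + 2 * ‖A - B‖) := by
        refine Finset.sum_le_sum fun j _ => ?_
        rw [dist_eq_norm]
        exact key j
    _ = k * (lam ⟨r, hr⟩ + 2 * ‖A - B‖) := by
        rw [Finset.sum_const, Finset.card_univ, Fintype.card_fin, nsmul_eq_mul]
end

section
/- For a symmetric order-ℓ tensor T on ℝ^d with symmetric rank at most r, the spectral norm ‖T‖ and Frobenius norm ‖T‖_F satisfy ‖T‖ ≥ r^{−ℓ/2} ‖T‖_F (and always ‖T‖ ≤ ‖T‖_F). -/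
open Finset

/-- Frobenius norm of a tensor given by its entries. -/
noncomputable def frobNorm {ι : Type*} [Fintype ι] (T : ι → ℝ) : ℝ :=
  Real.sqrt (∑ j, T j ^ 2)

/-- Spectral norm of an order-ℓ tensor on ℝ^d. -/
noncomputable def specNorm {ℓ d : ℕ} (T : (Fin ℓ → Fin d) → ℝ) : ℝ :=
  sSup {x | ∃ u : Fin ℓ → EuclideanSpace ℝ (Fin d),
    (∀ p, ‖u p‖ = 1) ∧ x = |∑ j, T j * ∏ p, u p (j p)|}

/-- Symmetry of a tensor under permutation of indices. -/
def IsSymTensor {ℓ d : ℕ} (T : (Fin ℓ → Fin d) → ℝ) : Prop :=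
  ∀ (σ : Equiv.Perm (Fin ℓ)) (j : Fin ℓ → Fin d), T (j ∘ σ) = T j

/-- Symmetric rank at most r. -/
def SymRankLE {ℓ d : ℕ} (r : ℕ) (T : (Fin ℓ → Fin d) → ℝ) : Prop :=
  ∃ (α : Fin r → ℝ) (v : Fin r → EuclideanSpace ℝ (Fin d)),
    ∀ j, T j = ∑ i, α i * ∏ p, v i (j p)

/- Auxiliary lemmas -/

lemma aux_sum_prod_mul {d ℓ : ℕ} (w w' : Fin ℓ → EuclideanSpace ℝ (Fin d)) :
    ∑ j : Fin ℓ → Fin d, ((∏ p, w p (j p)) * ∏ p, w' p (j p))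
      = ∏ p, ∑ x, w p x * w' p x := by
  rw [Fintype.prod_sum (fun p x => w p x * w' p x)]
  exact Finset.sum_congr rfl fun j _ => (Finset.prod_mul_distrib).symm

lemma aux_sum_sq_one {d : ℕ} (x : EuclideanSpace ℝ (Fin d)) (h : ‖x‖ = 1) :
    ∑ i, x i * x i = 1 := by
  have h1 := EuclideanSpace.norm_eq x
  rw [h] at h1
  have h2 : ∑ i, ‖x i‖ ^ 2 = 1 := by
    nlinarith [Real.sq_sqrt (by positivity : (0:ℝ) ≤ ∑ i, ‖x i‖ ^ 2), h1]
  have : ∀ i, x i * x i = ‖x i‖ ^ 2 := by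
    intro i; rw [Real.norm_eq_abs, sq_abs]; ring
  rw [Finset.sum_congr rfl fun i _ => this i, h2]

/-- Elements of the spectral-norm set are bounded by the Frobenius norm. -/
lemma aux_elem_le {d ℓ : ℕ} (T : (Fin ℓ → Fin d) → ℝ)
    (u : Fin ℓ → EuclideanSpace ℝ (Fin d)) (hu : ∀ p, ‖u p‖ = 1) :
    |∑ j, T j * ∏ p, u p (j p)| ≤ frobNorm T := by
  have hP : ∑ j : Fin ℓ → Fin d, (∏ p, u p (j p)) ^ 2 = 1 := by
    have := aux_sum_prod_mul u u
    rw [Finset.prod_congr rfl fun p _ => aux_sum_sq_one (u p) (hu p),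
      Finset.prod_const_one] at this
    rw [← this]
    exact Finset.sum_congr rfl fun j _ => (sq _)
  have hcs := Finset.sum_mul_sq_le_sq_mul_sq Finset.univ T
    (fun j => ∏ p, u p (j p))
  rw [hP, mul_one] at hcs
  have h0 : (0:ℝ) ≤ ∑ j, T j ^ 2 := by positivity
  rw [frobNorm, ← Real.sqrt_sq_eq_abs]
  exact Real.sqrt_le_sqrt hcs

lemma aux_bddAbove {d ℓ : ℕ} (T : (Fin ℓ → Fin d) → ℝ) :
    BddAbove {x | ∃ u : Fin ℓ → EuclideanSpace ℝ (Fin d),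
      (∀ p, ‖u p‖ = 1) ∧ x = |∑ j, T j * ∏ p, u p (j p)|} := by
  refine ⟨frobNorm T, fun x hx => ?_⟩
  obtain ⟨u, hu, rfl⟩ := hx
  exact aux_elem_le T u hu

lemma aux_spec_nonneg {d ℓ : ℕ} (T : (Fin ℓ → Fin d) → ℝ) : 0 ≤ specNorm T := by
  rcases Set.eq_empty_or_nonempty {x | ∃ u : Fin ℓ → EuclideanSpace ℝ (Fin d),
      (∀ p, ‖u p‖ = 1) ∧ x = |∑ j, T j * ∏ p, u p (j p)|} with h | h
  · rw [specNorm, h, Real.sSup_empty]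
  · obtain ⟨x, hx⟩ := h
    obtain ⟨u, hu, rfl⟩ := hx
    exact le_trans (abs_nonneg _) (le_csSup (aux_bddAbove T) ⟨u, hu, rfl⟩)

lemma aux_abs_le_spec {d ℓ : ℕ} (T : (Fin ℓ → Fin d) → ℝ)
    (u : Fin ℓ → EuclideanSpace ℝ (Fin d)) (hu : ∀ p, ‖u p‖ = 1) :
    |∑ j, T j * ∏ p, u p (j p)| ≤ specNorm T :=
  le_csSup (aux_bddAbove T) ⟨u, hu, rfl⟩

/-- Main inequality: Frobenius norm is at most `√(r^ℓ)` times the spectral norm. -/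
lemma aux_frob_le {d ℓ r : ℕ} (T : (Fin ℓ → Fin d) → ℝ) (hrank : SymRankLE r T) :
    frobNorm T ≤ Real.sqrt ((r : ℝ) ^ ℓ) * specNorm T := by
  classical
  obtain ⟨α, v, hT⟩ := hrank
  set V : Submodule ℝ (EuclideanSpace ℝ (Fin d)) := Submodule.span ℝ (Set.range v) with hV
  set m : ℕ := Module.finrank ℝ V with hmdef
  have hm : m ≤ r := by
    have := finrank_range_le_card (R := ℝ) v
    simpa [Set.finrank, hmdef, hV] using this
  set b : OrthonormalBasis (Fin m) ℝ V := stdOrthonormalBasis ℝ V with hb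
  set u : Fin m → EuclideanSpace ℝ (Fin d) := fun k => (b k : EuclideanSpace ℝ (Fin d)) with hu
  have hu_inner : ∀ k k', (inner ℝ (u k) (u k') : ℝ) = if k = k' then 1 else 0 := by
    intro k k'
    have h1 : (inner ℝ (u k) (u k') : ℝ) = (inner ℝ (b k) (b k') : ℝ) := rfl
    rw [h1]
    have := b.orthonormal
    rw [orthonormal_iff_ite] at this
    exact this k k'
  have hu_norm : ∀ k, ‖u k‖ = 1 := fun k => b.orthonormal.1 k
  -- coordinates of v i in the basis
  have hvmem : ∀ i, v i ∈ V := fun i => Submodule.subset_span (Set.mem_range_self i)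
  set c : Fin r → Fin m → ℝ := fun i k => b.repr ⟨v i, hvmem i⟩ k with hc
  have hv_expand : ∀ i (x : Fin d), v i x = ∑ k, c i k * u k x := by
    intro i x
    have h1 : (∑ k, b.repr ⟨v i, hvmem i⟩ k • b k) = (⟨v i, hvmem i⟩ : V) :=
      b.sum_repr _
    have h2 : ((⟨v i, hvmem i⟩ : V) : EuclideanSpace ℝ (Fin d)) = v i := rfl
    rw [← h2, ← h1]
    push_cast
    rw [WithLp.ofLp_sum, Finset.sum_apply]
    exact Finset.sum_congr rfl fun k _ => rfl
  set β : (Fin ℓ → Fin m) → ℝ := fun g => ∑ i, α i * ∏ p, c i (g p) with hβ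
  -- key 1 : T as a combination of orthonormal rank-1 tensors
  have key1 : ∀ j, T j = ∑ g : Fin ℓ → Fin m, β g * ∏ p, u (g p) (j p) := by
    intro j
    rw [hT j]
    have step : ∀ i, (∏ p, v i (j p))
        = ∑ g : Fin ℓ → Fin m, (∏ p, c i (g p)) * ∏ p, u (g p) (j p) := by
      intro i
      have h1 : (∏ p, v i (j p)) = ∏ p, ∑ k, c i k * u k (j p) :=
        Finset.prod_congr rfl fun p _ => hv_expand i (j p)
      rw [h1, Fintype.prod_sum (fun p k => c i k * u k (j p))]
      exact Finset.sum_congr rfl fun g _ => Finset.prod_mul_distrib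
    calc ∑ i, α i * ∏ p, v i (j p)
        = ∑ i, ∑ g : Fin ℓ → Fin m,
            α i * ((∏ p, c i (g p)) * ∏ p, u (g p) (j p)) := by
          refine Finset.sum_congr rfl fun i _ => ?_
          rw [step i, Finset.mul_sum]
      _ = ∑ g : Fin ℓ → Fin m, β g * ∏ p, u (g p) (j p) := by
          rw [Finset.sum_comm]
          refine Finset.sum_congr rfl fun g _ => ?_
          rw [hβ, Finset.sum_mul]
          exact Finset.sum_congr rfl fun i _ => by ring
  -- key 2 : orthonormality of the rank-1 tensors
  have key2 : ∀ g g' : Fin ℓ → Fin m,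
      ∑ j : Fin ℓ → Fin d, ((∏ p, u (g p) (j p)) * ∏ p, u (g' p) (j p))
        = if g = g' then 1 else 0 := by
    intro g g'
    rw [aux_sum_prod_mul (fun p => u (g p)) (fun p => u (g' p))]
    have h1 : ∀ p, ∑ x, u (g p) x * u (g' p) x
        = if g p = g' p then (1:ℝ) else 0 := by
      intro p
      have e : (inner ℝ (u (g p)) (u (g' p)) : ℝ) = ∑ x, u (g p) x * u (g' p) x := by
        simp only [PiLp.inner_apply, RCLike.inner_apply, conj_trivial]
        exact Finset.sum_congr rfl fun x _ => by ring
      rw [← e, hu_inner (g p) (g' p)]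
    rw [Finset.prod_congr rfl fun p _ => h1 p]
    by_cases hgg : g = g'
    · subst hgg; simp
    · rw [if_neg hgg]
      obtain ⟨p, hp⟩ := Function.ne_iff.mp hgg
      exact Finset.prod_eq_zero (Finset.mem_univ p) (if_neg hp)
  -- key 3 : β g is a spectral value
  have key3 : ∀ g : Fin ℓ → Fin m, β g = ∑ j, T j * ∏ p, u (g p) (j p) := by
    intro g
    calc β g = ∑ g' : Fin ℓ → Fin m, β g' * (if g' = g then 1 else 0) := by
          simp [mul_ite]
      _ = ∑ g' : Fin ℓ → Fin m, β g' *
            ∑ j : Fin ℓ → Fin d, ((∏ p, u (g' p) (j p)) * ∏ p, u (g p) (j p)) := by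
          refine Finset.sum_congr rfl fun g' _ => ?_
          rw [key2 g' g]
      _ = ∑ j : Fin ℓ → Fin d, ∑ g' : Fin ℓ → Fin m,
            (β g' * ∏ p, u (g' p) (j p)) * ∏ p, u (g p) (j p) := by
          rw [Finset.sum_comm]
          refine Finset.sum_congr rfl fun g' _ => ?_
          rw [Finset.mul_sum]
          exact Finset.sum_congr rfl fun j _ => by ring
      _ = ∑ j, T j * ∏ p, u (g p) (j p) := by
          refine Finset.sum_congr rfl fun j _ => ?_
          rw [key1 j, Finset.sum_mul]
  -- key 4 : Parseval
  have key4 : ∑ j, T j ^ 2 = ∑ g : Fin ℓ → Fin m, β g ^ 2 := by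
    symm
    calc ∑ g : Fin ℓ → Fin m, β g ^ 2
        = ∑ g : Fin ℓ → Fin m, β g * ∑ j, T j * ∏ p, u (g p) (j p) := by
          refine Finset.sum_congr rfl fun g _ => ?_
          rw [← key3 g]; ring
      _ = ∑ g : Fin ℓ → Fin m, ∑ j : Fin ℓ → Fin d,
            T j * (β g * ∏ p, u (g p) (j p)) := by
          refine Finset.sum_congr rfl fun g _ => ?_
          rw [Finset.mul_sum]
          exact Finset.sum_congr rfl fun j _ => by ring
      _ = ∑ j : Fin ℓ → Fin d, ∑ g : Fin ℓ → Fin m,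
            T j * (β g * ∏ p, u (g p) (j p)) := Finset.sum_comm
      _ = ∑ j, T j ^ 2 := by
          refine Finset.sum_congr rfl fun j _ => ?_
          rw [← Finset.mul_sum, ← key1 j]; ring
  -- key 5 : each β g is bounded by the spectral norm
  have key5 : ∀ g : Fin ℓ → Fin m, β g ^ 2 ≤ specNorm T ^ 2 := by
    intro g
    have h1 : |β g| ≤ specNorm T := by
      rw [key3 g]
      exact aux_abs_le_spec T (fun p => u (g p)) (fun p => hu_norm (g p))
    calc β g ^ 2 = |β g| ^ 2 := (sq_abs _).symm
      _ ≤ specNorm T ^ 2 := by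
          have := aux_spec_nonneg T
          nlinarith [abs_nonneg (β g)]
  -- put it together
  have hsum : ∑ j, T j ^ 2 ≤ (r : ℝ) ^ ℓ * specNorm T ^ 2 := by
    rw [key4]
    calc ∑ g : Fin ℓ → Fin m, β g ^ 2
        ≤ ∑ _g : Fin ℓ → Fin m, specNorm T ^ 2 :=
          Finset.sum_le_sum fun g _ => key5 g
      _ = (m : ℝ) ^ ℓ * specNorm T ^ 2 := by
          rw [Finset.sum_const, Finset.card_univ, Fintype.card_fun]
          simp [mul_comm]
      _ ≤ (r : ℝ) ^ ℓ * specNorm T ^ 2 := by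
          have h1 : (m : ℝ) ^ ℓ ≤ (r : ℝ) ^ ℓ := by
            apply pow_le_pow_left₀ (by positivity)
            exact_mod_cast hm
          nlinarith [aux_spec_nonneg T, sq_nonneg (specNorm T)]
  rw [frobNorm]
  calc Real.sqrt (∑ j, T j ^ 2) ≤ Real.sqrt ((r : ℝ) ^ ℓ * specNorm T ^ 2) :=
        Real.sqrt_le_sqrt hsum
    _ = Real.sqrt ((r : ℝ) ^ ℓ) * specNorm T := by
        rw [Real.sqrt_mul (by positivity), Real.sqrt_sq (aux_spec_nonneg T)]

/-- For a symmetric order-ℓ tensor of symmetric rank ≤ r,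
r^{-ℓ/2}‖T‖_F ≤ ‖T‖ ≤ ‖T‖_F. -/
theorem stmt4 (d ℓ r : ℕ) (T : (Fin ℓ → Fin d) → ℝ)
    (hsym : IsSymTensor T) (hrank : SymRankLE r T) :
    (r : ℝ) ^ (-(ℓ : ℝ) / 2) * frobNorm T ≤ specNorm T ∧ specNorm T ≤ frobNorm T := by
  constructor
  · have hfrob := aux_frob_le T hrank
    set t : ℝ := (r : ℝ) ^ (-(ℓ : ℝ) / 2) with ht
    have ht0 : 0 ≤ t := Real.rpow_nonneg (by positivity) _
    have hkey : t * Real.sqrt ((r : ℝ) ^ ℓ) ≤ 1 := by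
      rcases Nat.eq_zero_or_pos r with hr | hr
      · subst hr
        rcases Nat.eq_zero_or_pos ℓ with hl | hl
        · subst hl; simp [ht, Real.rpow_natCast]
        · have h0 : ((0:ℕ):ℝ) ^ ℓ = 0 := by
            push_cast
            exact zero_pow hl.ne'
          rw [h0, Real.sqrt_zero, mul_zero]; norm_num
      · have hrpos : (0:ℝ) < (r:ℝ) := by exact_mod_cast hr
        have h1 : Real.sqrt ((r : ℝ) ^ ℓ) = (r : ℝ) ^ ((ℓ : ℝ) / 2) := by
          rw [← Real.rpow_natCast (r:ℝ) ℓ, Real.rpow_natCast,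
            ← Real.rpow_natCast (r:ℝ) ℓ]
          rw [Real.sqrt_eq_rpow, ← Real.rpow_mul hrpos.le]
          ring_nf
        rw [h1, ht, ← Real.rpow_add hrpos]
        have he : -(ℓ:ℝ) / 2 + (ℓ:ℝ) / 2 = 0 := by ring
        rw [he, Real.rpow_zero]
    calc t * frobNorm T ≤ t * (Real.sqrt ((r : ℝ) ^ ℓ) * specNorm T) :=
          mul_le_mul_of_nonneg_left hfrob ht0
      _ = (t * Real.sqrt ((r : ℝ) ^ ℓ)) * specNorm T := by ring
      _ ≤ 1 * specNorm T :=
          mul_le_mul_of_nonneg_right hkey (aux_spec_nonneg T)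
      _ = specNorm T := one_mul _
  · rw [specNorm]
    apply Real.sSup_le
    · rintro x ⟨u, hu, rfl⟩
      exact aux_elem_le T u hu
    · exact Real.sqrt_nonneg _
end

section
/- The degree-ℓ derivative of e^{y²/4} satisfies the bound |(e^{y²/4})^{(ℓ)}(y)| ≤ (e^{R²/4}/2^ℓ) · ℓ^{ℓ/2} · (1+R)^ℓ for all |y| ≤ R, using the explicit formula (e^{y²/4})^{(ℓ)} = (e^{y²/4}/2^ℓ) Σ_{i=0}^{⌊ℓ/2⌋} binomial(ℓ, 2i) · ((2i)!/i!) · y^{ℓ−2i}. -/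
noncomputable def cc (n i : ℕ) : ℝ := (n.choose (2*i) : ℝ) * ((2*i).factorial : ℝ) / (i.factorial : ℝ)

lemma cc_rec (ℓ j : ℕ) : cc (ℓ+1) (j+1) = cc ℓ (j+1) + 2 * ((ℓ - 2*j : ℕ) : ℝ) * cc ℓ j := by
  unfold cc
  simp only [show 2*(j+1) = 2*j+2 from by ring]
  rcases le_or_gt ℓ (2*j) with h | h
  · rw [Nat.choose_eq_zero_of_lt (by omega), Nat.choose_eq_zero_of_lt (by omega),
      Nat.sub_eq_zero_of_le h]
    push_cast; ring
  · have hp : (ℓ+1).choose (2*j+2) = ℓ.choose (2*j+1) + ℓ.choose (2*j+2) :=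
      Nat.choose_succ_succ' ℓ (2*j+1)
    have h1 : (ℓ.choose (2*j+1) : ℝ) * (2*j+1) = (ℓ.choose (2*j) : ℝ) * ((ℓ - 2*j : ℕ) : ℝ) := by
      exact_mod_cast congrArg (Nat.cast : ℕ → ℝ) (Nat.choose_succ_right_eq ℓ (2*j))
    have hfact2 : ((2*j+2).factorial : ℝ) = (2*(j:ℝ)+2) * (2*j+1) * ((2*j).factorial : ℝ) := by
      rw [Nat.factorial_succ, Nat.factorial_succ]; push_cast; ring
    have hfactj : ((j+1).factorial : ℝ) = ((j:ℝ)+1) * (j.factorial : ℝ) := by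
      rw [Nat.factorial_succ]; push_cast; ring
    have hje : (j.factorial : ℝ) ≠ 0 := Nat.cast_ne_zero.2 (Nat.factorial_ne_zero j)
    have hj1 : ((j:ℝ)+1) ≠ 0 := by positivity
    rw [hp, hfact2, hfactj]
    push_cast
    field_simp
    linear_combination h1

lemma cc_zero (n i : ℕ) (h : n < 2*i) : cc n i = 0 := by
  unfold cc; rw [Nat.choose_eq_zero_of_lt h]; simp

lemma sum_pad (ℓ n : ℕ) (hn : ℓ/2+1 ≤ n) (y : ℝ) :
    ∑ i ∈ Finset.range n, cc ℓ i * y ^ (ℓ - 2*i)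
      = ∑ i ∈ Finset.range (ℓ/2+1), cc ℓ i * y ^ (ℓ - 2*i) := by
  symm
  apply Finset.sum_subset (Finset.range_subset_range.2 hn)
  intro i _ hi
  rw [Finset.mem_range, not_lt] at hi
  rw [cc_zero ℓ i (by omega), zero_mul]

lemma hasDeriv_main (ℓ : ℕ) (y : ℝ) :
    HasDerivAt (fun y : ℝ => Real.exp (y^2/4) / 2^ℓ * ∑ i ∈ Finset.range (ℓ+2), cc ℓ i * y ^ (ℓ - 2*i))
      (Real.exp (y^2/4) * (2*y^1/4) / 2^ℓ * (∑ i ∈ Finset.range (ℓ+2), cc ℓ i * y ^ (ℓ - 2*i))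
        + Real.exp (y^2/4) / 2^ℓ * ∑ i ∈ Finset.range (ℓ+2), cc ℓ i * (((ℓ - 2*i : ℕ):ℝ) * y ^ (ℓ - 2*i - 1))) y := by
  exact ((((hasDerivAt_pow 2 y).div_const 4).exp).div_const _).mul
    (HasDerivAt.fun_sum fun i _ => (hasDerivAt_pow _ y).const_mul _)

lemma cc_zero' (n : ℕ) : cc n 0 = 1 := by unfold cc; simp

lemma key (ℓ : ℕ) (y : ℝ) :
    ∑ i ∈ Finset.range (ℓ+3), cc (ℓ+1) i * y ^ (ℓ+1-2*i)
    = y * (∑ i ∈ Finset.range (ℓ+2), cc ℓ i * y ^ (ℓ-2*i))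
      + 2 * ∑ i ∈ Finset.range (ℓ+2), cc ℓ i * (((ℓ-2*i:ℕ):ℝ) * y ^ (ℓ-2*i-1)) := by
  rw [show ℓ+3 = (ℓ+2)+1 from rfl, Finset.sum_range_succ']
  have hL : ∑ i ∈ Finset.range (ℓ+2), cc (ℓ+1) (i+1) * y ^ (ℓ+1-2*(i+1))
      = ∑ i ∈ Finset.range (ℓ+2), (cc ℓ (i+1) * y ^ (ℓ+1-2*(i+1))
          + 2*((ℓ-2*i:ℕ):ℝ) * cc ℓ i * y ^ (ℓ+1-2*(i+1))) := by
    refine Finset.sum_congr rfl fun i _ => ?_; rw [cc_rec]; ring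
  rw [hL, Finset.sum_add_distrib]
  -- second piece equals 2 * derivative sum
  have h2 : ∑ i ∈ Finset.range (ℓ+2), 2*((ℓ-2*i:ℕ):ℝ) * cc ℓ i * y ^ (ℓ+1-2*(i+1))
      = 2 * ∑ i ∈ Finset.range (ℓ+2), cc ℓ i * (((ℓ-2*i:ℕ):ℝ) * y ^ (ℓ-2*i-1)) := by
    rw [Finset.mul_sum]
    refine Finset.sum_congr rfl fun i _ => ?_
    rw [show ℓ+1-2*(i+1) = ℓ-2*i-1 from by omega]; ring
  -- first piece + y^{ℓ+1} equals y * S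
  have h1 : y * (∑ i ∈ Finset.range (ℓ+2), cc ℓ i * y ^ (ℓ-2*i))
      = (∑ i ∈ Finset.range (ℓ+2), cc ℓ (i+1) * y ^ (ℓ+1-2*(i+1))) + cc (ℓ+1) 0 * y ^ (ℓ+1-2*0) := by
    rw [show ℓ+2 = (ℓ+1)+1 from rfl, Finset.sum_range_succ (fun i => cc ℓ (i+1) * y ^ (ℓ+1-2*(i+1))),
      cc_zero ℓ (ℓ+1+1) (by omega), zero_mul, add_zero,
      Finset.mul_sum, Finset.sum_range_succ']
    congr 1
    · refine Finset.sum_congr rfl fun i _ => ?_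
      rcases le_or_gt (2*(i+1)) ℓ with h | h
      · rw [show ℓ+1-2*(i+1) = (ℓ-2*(i+1))+1 from by omega, pow_succ]; ring
      · rw [cc_zero ℓ (i+1) (by omega)]; ring
    · rw [cc_zero', cc_zero']
      rw [show ℓ - 2*0 = ℓ from by omega, show ℓ+1-2*0 = ℓ+1 from by omega, pow_succ]; ring
  rw [h2, h1]; ring

lemma formula : ∀ (ℓ : ℕ) (y : ℝ), iteratedDeriv ℓ (fun y => Real.exp (y^2/4)) y
    = Real.exp (y^2/4) / 2^ℓ * ∑ i ∈ Finset.range (ℓ+2), cc ℓ i * y ^ (ℓ-2*i) := by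
  intro ℓ
  induction ℓ with
  | zero =>
    intro y
    simp [Finset.sum_range_succ, cc_zero', cc_zero 0 1 (by omega)]
  | succ n ih =>
    intro y
    rw [iteratedDeriv_succ, funext ih, (hasDeriv_main n y).deriv,
      show n+1+2 = n+3 from rfl, key n y]
    ring

lemma boundK (ℓ i : ℕ) (h : 2*i ≤ ℓ) :
    ((2*i).factorial:ℝ)/(i.factorial:ℝ) ≤ (ℓ:ℝ)^((ℓ:ℝ)/2) := by
  have hfpos : (0:ℝ) < (i.factorial:ℝ) := by exact_mod_cast Nat.factorial_pos i
  rcases Nat.eq_zero_or_pos ℓ with h0 | h0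
  · have : i = 0 := by omega
    subst this; subst h0
    simp [Real.rpow_natCast]
  · rw [div_le_iff₀ hfpos]
    have h1 : ((2*i).factorial:ℝ) ≤ ((2*i:ℕ):ℝ)^i * (i.factorial:ℝ) := by
      exact_mod_cast Nat.factorial_two_mul_le i
    have h2 : ((2*i:ℕ):ℝ)^i ≤ (ℓ:ℝ)^i := by
      apply pow_le_pow_left₀ (by positivity) (by exact_mod_cast h)
    have h3 : (ℓ:ℝ)^i ≤ (ℓ:ℝ)^((ℓ:ℝ)/2) := by
      rw [← Real.rpow_natCast (ℓ:ℝ) i]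
      apply Real.rpow_le_rpow_of_exponent_le (by exact_mod_cast h0)
      have : (2*i:ℝ) ≤ (ℓ:ℝ) := by exact_mod_cast h
      linarith
    calc ((2*i).factorial:ℝ) ≤ ((2*i:ℕ):ℝ)^i * (i.factorial:ℝ) := h1
      _ ≤ (ℓ:ℝ)^((ℓ:ℝ)/2) * (i.factorial:ℝ) := by
          apply mul_le_mul_of_nonneg_right (h2.trans h3) hfpos.le

lemma binom_sum (ℓ : ℕ) (R : ℝ) (hR : 0 ≤ R) :
    ∑ i ∈ Finset.range (ℓ/2+1), (ℓ.choose (2*i) : ℝ) * R ^ (ℓ-2*i) ≤ (1+R)^ℓ := by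
  have hpow : (1+R)^ℓ = ∑ k ∈ Finset.range (ℓ+1), (ℓ.choose k : ℝ) * R ^ (ℓ-k) := by
    rw [add_pow]
    exact Finset.sum_congr rfl fun k _ => by ring
  rw [hpow]
  have himg : ∑ i ∈ Finset.range (ℓ/2+1), (ℓ.choose (2*i) : ℝ) * R ^ (ℓ-2*i)
      = ∑ k ∈ (Finset.range (ℓ/2+1)).image (fun i => 2*i), (ℓ.choose k : ℝ) * R ^ (ℓ-k) := by
    rw [Finset.sum_image]
    intro a _ b _ hab; beta_reduce at hab; omega
  rw [himg]
  apply Finset.sum_le_sum_of_subset_of_nonneg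
  · intro k hk
    simp only [Finset.mem_image, Finset.mem_range] at hk ⊢
    obtain ⟨i, hi, rfl⟩ := hk
    omega
  · intro k _ _
    positivity

/-- Explicit formula and bound for the ℓ-th derivative of e^{y²/4} on [−R,R]. -/
theorem stmt14 (ℓ : ℕ) (R : ℝ) (hR : 0 < R) :
    (∀ y : ℝ, iteratedDeriv ℓ (fun y => Real.exp (y ^ 2 / 4)) y
        = Real.exp (y ^ 2 / 4) / 2 ^ ℓ *
          ∑ i ∈ Finset.range (ℓ / 2 + 1),
            (ℓ.choose (2 * i) : ℝ) * ((2 * i).factorial : ℝ) / (i.factorial : ℝ)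
              * y ^ (ℓ - 2 * i))
    ∧ ∀ y : ℝ, |y| ≤ R →
        |iteratedDeriv ℓ (fun y => Real.exp (y ^ 2 / 4)) y|
          ≤ Real.exp (R ^ 2 / 4) / 2 ^ ℓ * (ℓ : ℝ) ^ ((ℓ : ℝ) / 2) * (1 + R) ^ ℓ := by
  have hform : ∀ y : ℝ, iteratedDeriv ℓ (fun y => Real.exp (y ^ 2 / 4)) y
      = Real.exp (y ^ 2 / 4) / 2 ^ ℓ * ∑ i ∈ Finset.range (ℓ / 2 + 1),
          (ℓ.choose (2 * i) : ℝ) * ((2 * i).factorial : ℝ) / (i.factorial : ℝ)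
            * y ^ (ℓ - 2 * i) := by
    intro y
    rw [formula ℓ y, sum_pad ℓ (ℓ+2) (by omega) y]
    rfl
  refine ⟨hform, fun y hy => ?_⟩
  rw [hform y]
  have hE : Real.exp (y^2/4) ≤ Real.exp (R^2/4) := by
    apply Real.exp_le_exp.2
    have h2 : y^2 ≤ R^2 := by nlinarith [sq_abs y, abs_nonneg y]
    linarith
  set K := (ℓ:ℝ)^((ℓ:ℝ)/2) with hKdef
  have hK0 : (0:ℝ) ≤ K := Real.rpow_nonneg (by positivity) _
  have hsum : |∑ i ∈ Finset.range (ℓ/2+1),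
        (ℓ.choose (2*i):ℝ) * ((2*i).factorial:ℝ)/(i.factorial:ℝ) * y^(ℓ-2*i)|
      ≤ K * (1+R)^ℓ := by
    calc |∑ i ∈ Finset.range (ℓ/2+1),
          (ℓ.choose (2*i):ℝ) * ((2*i).factorial:ℝ)/(i.factorial:ℝ) * y^(ℓ-2*i)|
        ≤ ∑ i ∈ Finset.range (ℓ/2+1),
          |(ℓ.choose (2*i):ℝ) * ((2*i).factorial:ℝ)/(i.factorial:ℝ) * y^(ℓ-2*i)| :=
          Finset.abs_sum_le_sum_abs _ _
      _ ≤ ∑ i ∈ Finset.range (ℓ/2+1), (ℓ.choose (2*i):ℝ) * (K * R^(ℓ-2*i)) := by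
          apply Finset.sum_le_sum
          intro i hi
          rw [Finset.mem_range] at hi
          have h2i : 2*i ≤ ℓ := by omega
          rw [abs_mul, mul_div_assoc, abs_mul,
            abs_of_nonneg (a := (ℓ.choose (2*i):ℝ)) (by positivity),
            abs_of_nonneg (a := ((2*i).factorial:ℝ)/(i.factorial:ℝ)) (by positivity),
            abs_pow, mul_assoc]
          have hyR : |y|^(ℓ-2*i) ≤ R^(ℓ-2*i) := pow_le_pow_left₀ (abs_nonneg y) hy _
          have hbk := boundK ℓ i h2i
          gcongr
      _ = K * ∑ i ∈ Finset.range (ℓ/2+1), (ℓ.choose (2*i):ℝ) * R^(ℓ-2*i) := by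
          rw [Finset.mul_sum]
          exact Finset.sum_congr rfl fun i _ => by ring
      _ ≤ K * (1+R)^ℓ := mul_le_mul_of_nonneg_left (binom_sum ℓ R hR.le) hK0
  have hpos : (0:ℝ) < Real.exp (y^2/4) / 2^ℓ := by positivity
  rw [abs_mul, abs_of_pos hpos]
  calc Real.exp (y^2/4) / 2^ℓ * |∑ i ∈ Finset.range (ℓ/2+1),
        (ℓ.choose (2*i):ℝ) * ((2*i).factorial:ℝ)/(i.factorial:ℝ) * y^(ℓ-2*i)|
      ≤ Real.exp (R^2/4) / 2^ℓ * (K * (1+R)^ℓ) := by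
        apply mul_le_mul (by gcongr) hsum (abs_nonneg _) (by positivity)
    _ = Real.exp (R^2/4) / 2^ℓ * K * (1+R)^ℓ := by ring
end
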